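/- arXiv:2509.05194 — 4 statements merged into one kernel-verified Lean document; each statement's English description precedes it below -/
import Mathlib

section
/- Let A be a 2×2 matrix with integer entries. If A^n is a diagonal matrix for some n ≥ 1, then A^k is a diagonal matrix for some k ∈ {1,2,3,4,6}. -/
/-!
Over `ℂ` write `t = tr A = α + β` and `d = det A = α β`. By Cayley–Hamilton the off-diagonal
entries of `A ^ m` are `U_m(t, d)` times those of `A`, where `U` is the Lucas sequence, and
`(α - β) U_m = α ^ m - β ^ m`. So if `A` is not diagonal, `A ^ n` diagonal means `U_n = 0`,
i.e. (when `α ≠ β`) `ζ = α / β` is a root of unity. Its trace `ζ + ζ⁻¹ = (t ^ 2 - 2 d) / d` is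
rational and an algebraic integer, hence an integer `c` with `|c| ≤ 2`, and `ζ ^ 2 - c ζ + 1 = 0`
forces `ζ ^ k = 1` for some `k ∈ {1, 2, 3, 4, 6}`, i.e. `U_k = 0`. When `α = β`,
`U_n = n α ^ (n - 1)` vanishes only if `α = 0`, and then `U_2 = t = 0`.
-/

theorem exists_pow_eq_one_of_sq_sub_intCast_mul_add_one_eq_zero {R : Type*} [CommRing R]
    [NoZeroDivisors R] {ζ : R} {c : ℤ} (hc : |c| ≤ 2) (h : ζ ^ 2 - c * ζ + 1 = 0) :
    ∃ k ∈ ({1, 2, 3, 4, 6} : Finset ℕ), ζ ^ k = 1 := by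
  obtain ⟨hc₁, hc₂⟩ := abs_le.mp hc
  interval_cases c
  · have hζ : ζ + 1 = 0 := pow_eq_zero_iff two_ne_zero |>.mp (by linear_combination h)
    exact ⟨2, by simp, by linear_combination (ζ - 1) * hζ⟩
  · exact ⟨3, by simp, by linear_combination (ζ - 1) * h⟩
  · exact ⟨4, by simp, by linear_combination (ζ ^ 2 - 1) * h⟩
  · exact ⟨6, by simp, by linear_combination (ζ ^ 4 + ζ ^ 3 - ζ - 1) * h⟩
  · have hζ : ζ - 1 = 0 := pow_eq_zero_iff two_ne_zero |>.mp (by linear_combination h)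
    exact ⟨1, by simp, by linear_combination hζ⟩

theorem Complex.exists_pow_eq_one_of_pow_eq_one_of_add_inv_eq_ratCast {ζ : ℂ} {n : ℕ}
    (hn : n ≠ 0) (hζ : ζ ^ n = 1) {q : ℚ} (hq : ζ + ζ⁻¹ = q) :
    ∃ k ∈ ({1, 2, 3, 4, 6} : Finset ℕ), ζ ^ k = 1 := by
  have hint : IsIntegral ℤ (ζ + ζ⁻¹) := by
    have hζ' : ζ⁻¹ ^ n = 1 := by rw [inv_pow, hζ, inv_one]
    exact (IsIntegral.of_pow (Nat.pos_of_ne_zero hn) (hζ ▸ isIntegral_one)).add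
      (IsIntegral.of_pow (Nat.pos_of_ne_zero hn) (hζ' ▸ isIntegral_one))
  obtain ⟨c, hc⟩ := hint.exists_int_iff_exists_rat.mp ⟨q, hq⟩
  have hnorm : ‖ζ‖ = 1 := norm_eq_one_of_pow_eq_one hζ hn
  have hζ0 : ζ ≠ 0 := by rintro rfl; simp at hnorm
  have hc2 : |c| ≤ 2 := by
    have : ‖(c : ℂ)‖ ≤ 2 := calc
      ‖(c : ℂ)‖ = ‖ζ + ζ⁻¹‖ := by rw [hc]
      _ ≤ ‖ζ‖ + ‖ζ⁻¹‖ := norm_add_le _ _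
      _ = 2 := by rw [norm_inv, hnorm]; norm_num
    rw [Complex.norm_intCast] at this
    exact_mod_cast this
  refine exists_pow_eq_one_of_sq_sub_intCast_mul_add_one_eq_zero hc2 ?_
  rw [← hc]
  field_simp
  ring

open Polynomial in
theorem IsAlgClosed.exists_add_eq_and_mul_eq {K : Type*} [Field K] [IsAlgClosed K] (t d : K) :
    ∃ α β : K, α + β = t ∧ α * β = d := by
  obtain ⟨α, hα⟩ := IsAlgClosed.exists_root (X ^ 2 - C t * X + C d) (by
    rw [show (X ^ 2 - C t * X + C d : K[X]).degree = 2 by compute_degree!]; decide)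
  refine ⟨α, t - α, by ring, ?_⟩
  simp only [IsRoot, eval_add, eval_sub, eval_pow, eval_mul, eval_C, eval_X] at hα
  linear_combination -hα

def lucasU {R : Type*} [CommRing R] (t d : R) : ℕ → R
  | 0 => 0
  | 1 => 1
  | m + 2 => t * lucasU t d (m + 1) - d * lucasU t d m

namespace lucasU

variable {R S : Type*} [CommRing R] [CommRing S] (t d : R)

@[simp] theorem zero : lucasU t d 0 = 0 := rfl
@[simp] theorem one : lucasU t d 1 = 1 := rfl
theorem add_two (m : ℕ) : lucasU t d (m + 2) = t * lucasU t d (m + 1) - d * lucasU t d m := rfl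

theorem eq_mul_of_rec {f : ℕ → R} (h0 : f 0 = 0)
    (h : ∀ m, f (m + 2) = t * f (m + 1) - d * f m) (m : ℕ) : f m = lucasU t d m * f 1 := by
  induction m using Nat.twoStepInduction with
  | zero => simp [h0]
  | one => simp
  | more m ih₁ ih₂ => rw [h, ih₁, ih₂, add_two]; ring

theorem map (f : R →+* S) (m : ℕ) : f (lucasU t d m) = lucasU (f t) (f d) m := by
  simpa using eq_mul_of_rec (f t) (f d) (f := fun m ↦ f (lucasU t d m)) (by simp)
    (fun m ↦ by simp [add_two]) m

theorem sub_mul_eq_pow_sub_pow (α β : R) (m : ℕ) :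
    (α - β) * lucasU (α + β) (α * β) m = α ^ m - β ^ m := by
  simpa [mul_comm] using (eq_mul_of_rec (α + β) (α * β) (f := fun m ↦ α ^ m - β ^ m) (by simp)
    (fun m ↦ by ring) m).symm

theorem add_self_self (α : R) (m : ℕ) :
    lucasU (α + α) (α * α) (m + 1) = (m + 1) * α ^ m := by
  induction m using Nat.twoStepInduction with
  | zero => simp
  | one => simp [add_two]; ring
  | more m ih₁ ih₂ => rw [add_two, ih₁, ih₂]; push_cast; ring

theorem two : lucasU t d 2 = t := by simp [add_two]

end lucasU

theorem lucasU.exists_mem_eq_zero_of_eq_zero {t d : ℤ} {n : ℕ} (hn : n ≠ 0)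
    (h : lucasU t d n = 0) : ∃ k ∈ ({1, 2, 3, 4, 6} : Finset ℕ), lucasU t d k = 0 := by
  obtain ⟨α, β, hsum, hprod⟩ := IsAlgClosed.exists_add_eq_and_mul_eq (t : ℂ) d
  have hcast (m : ℕ) : lucasU t d m = 0 ↔ lucasU (α + β) (α * β) m = 0 := by
    have := lucasU.map t d (Int.castRingHom ℂ) m
    rw [eq_intCast, eq_intCast, eq_intCast] at this
    rw [hsum, hprod, ← this, Int.cast_eq_zero]
  rw [hcast] at h
  by_cases hαβ : α = β
  · subst hαβ
    obtain ⟨m, rfl⟩ := Nat.exists_eq_add_one_of_ne_zero hn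
    rw [lucasU.add_self_self] at h
    have hα : α = 0 := eq_zero_of_pow_eq_zero ((mul_eq_zero.mp h).resolve_left (by norm_cast))
    exact ⟨2, by simp, by rw [hcast, lucasU.two, hα, add_zero]⟩
  have hpow (m : ℕ) : lucasU (α + β) (α * β) m = 0 ↔ α ^ m = β ^ m := by
    rw [← sub_eq_zero (a := α ^ m), ← lucasU.sub_mul_eq_pow_sub_pow, mul_eq_zero,
      or_iff_right (sub_ne_zero.mpr hαβ)]
  rw [hpow] at h
  have hβ : β ≠ 0 := by
    rintro rfl
    exact hαβ (eq_zero_of_pow_eq_zero (by simpa [zero_pow hn] using h))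
  have hα : α ≠ 0 := by
    rintro rfl
    exact hαβ (eq_zero_of_pow_eq_zero (by simpa [zero_pow hn] using h.symm)).symm
  have hd : (d : ℂ) ≠ 0 := hprod ▸ mul_ne_zero hα hβ
  obtain ⟨k, hk, hζ⟩ := Complex.exists_pow_eq_one_of_pow_eq_one_of_add_inv_eq_ratCast hn
    (ζ := α / β) (by rw [div_pow, h, div_self (pow_ne_zero n hβ)]) (q := (t ^ 2 - 2 * d) / d)
    (by push_cast; rw [← hsum, ← hprod]; field_simp; ring)
  refine ⟨k, hk, (hcast k).2 ((hpow k).2 ?_)⟩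
  rwa [div_pow, div_eq_one_iff_eq (pow_ne_zero k hβ)] at hζ

namespace Matrix

variable {R : Type*} [CommRing R]

theorem sq_fin_two_eq (A : Matrix (Fin 2) (Fin 2) R) : A ^ 2 = A.trace • A - A.det • 1 := by
  ext i j
  fin_cases i <;> fin_cases j <;> simp [sq, mul_apply, trace_fin_two, det_fin_two] <;> ring

theorem pow_apply_of_ne_fin_two (A : Matrix (Fin 2) (Fin 2) R) {i j : Fin 2} (hij : i ≠ j)
    (m : ℕ) : (A ^ m) i j = lucasU A.trace A.det m * A i j := by
  refine lucasU.eq_mul_of_rec A.trace A.det (f := fun m ↦ (A ^ m) i j) (by simp [one_apply_ne hij])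
    (fun m ↦ ?_) m |>.trans (by simp)
  rw [pow_add, sq_fin_two_eq, Matrix.mul_sub, Matrix.mul_smul, Matrix.mul_smul, Matrix.mul_one,
    ← pow_succ, sub_apply, smul_apply, smul_apply, smul_eq_mul, smul_eq_mul]

theorem isDiag_pow_fin_two_iff [NoZeroDivisors R] (A : Matrix (Fin 2) (Fin 2) R) (m : ℕ) :
    (A ^ m).IsDiag ↔ A.IsDiag ∨ lucasU A.trace A.det m = 0 := by
  refine ⟨fun h ↦ or_iff_not_imp_left.mpr fun hA ↦ ?_, ?_⟩
  · obtain ⟨i, j, hij, hAij⟩ : ∃ i j, i ≠ j ∧ A i j ≠ 0 := by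
      simpa only [IsDiag, Pairwise, not_forall, exists_prop] using hA
    exact (mul_eq_zero.mp (pow_apply_of_ne_fin_two A hij m ▸ h hij)).resolve_right hAij
  · rintro (hA | hu) i j hij
    · rw [pow_apply_of_ne_fin_two A hij, hA hij, mul_zero]
    · rw [pow_apply_of_ne_fin_two A hij, hu, zero_mul]

end Matrix

/-- If a power `A^n` (n ≥ 1) of a 2×2 integer matrix is diagonal, then `A^k` is
diagonal for some `k ∈ {1,2,3,4,6}`. -/
theorem stmt_0 (A : Matrix (Fin 2) (Fin 2) ℤ) (n : ℕ) (hn : 1 ≤ n)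
    (h : (A ^ n).IsDiag) :
    ∃ k ∈ ({1, 2, 3, 4, 6} : Finset ℕ), (A ^ k).IsDiag := by
  obtain hA | hu := (A.isDiag_pow_fin_two_iff n).mp h
  · exact ⟨1, by simp, by rwa [pow_one]⟩
  · obtain ⟨k, hk, huk⟩ := lucasU.exists_mem_eq_zero_of_eq_zero (Nat.one_le_iff_ne_zero.mp hn) hu
    exact ⟨k, hk, (A.isDiag_pow_fin_two_iff k).mpr (.inr huk)⟩
end

section
/- Let A = [[3,1],[-3,3]] as a matrix over ℤ. Then A^12 = 2985984 · Id, and no smaller positive power of A is a diagonal matrix with positive entries. -/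
/-- For `A = [[3,1],[-3,3]]` over `ℤ`, `A^12 = 2985984 · Id` and no smaller
positive power of `A` is a diagonal matrix with positive entries. -/
theorem stmt_3 :
    let A : Matrix (Fin 2) (Fin 2) ℤ := !![3, 1; -3, 3]
    A ^ 12 = (2985984 : ℤ) • (1 : Matrix (Fin 2) (Fin 2) ℤ) ∧
      ∀ m : ℕ, 0 < m → m < 12 →
        ¬((A ^ m).IsDiag ∧ ∀ i, 0 < (A ^ m) i i) := by
  intro A
  constructor
  · show _ = (2985984 : ℤ) • (1 : Matrix (Fin 2) (Fin 2) ℤ)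
    rw [show ((2985984:ℤ) • (1 : Matrix (Fin 2) (Fin 2) ℤ)) = !![2985984,0;0,2985984] by
      simp only [Matrix.one_fin_two, Matrix.smul_of, Matrix.smul_cons, Matrix.smul_empty,
        smul_eq_mul]; norm_num]
    norm_num [A, pow_succ, Matrix.mul_fin_two]
  · rintro m hm hm' ⟨hd, hp⟩
    interval_cases m
    · have h : A ^ 1 = !![3,1;-3,3] := by norm_num [A]
      have := hd (show (0 : Fin 2) ≠ 1 by decide)
      rw [h] at this
      exact absurd this (by decide)
    · have h : A ^ 2 = !![6,6;-18,6] := by norm_num [A, pow_succ, Matrix.mul_fin_two]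
      have := hd (show (0 : Fin 2) ≠ 1 by decide)
      rw [h] at this
      exact absurd this (by decide)
    · have h : A ^ 3 = !![0,24;-72,0] := by norm_num [A, pow_succ, Matrix.mul_fin_two]
      have := hd (show (0 : Fin 2) ≠ 1 by decide)
      rw [h] at this
      exact absurd this (by decide)
    · have h : A ^ 4 = !![-72,72;-216,-72] := by norm_num [A, pow_succ, Matrix.mul_fin_two]
      have := hd (show (0 : Fin 2) ≠ 1 by decide)
      rw [h] at this
      exact absurd this (by decide)
    · have h : A ^ 5 = !![-432,144;-432,-432] := by norm_num [A, pow_succ, Matrix.mul_fin_two]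
      have := hd (show (0 : Fin 2) ≠ 1 by decide)
      rw [h] at this
      exact absurd this (by decide)
    · have h : A ^ 6 = !![-1728,0;0,-1728] := by norm_num [A, pow_succ, Matrix.mul_fin_two]
      have := hp 0
      rw [h] at this
      exact absurd this (by decide)
    · have h : A ^ 7 = !![-5184,-1728;5184,-5184] := by
        norm_num [A, pow_succ, Matrix.mul_fin_two]
      have := hd (show (0 : Fin 2) ≠ 1 by decide)
      rw [h] at this
      exact absurd this (by decide)
    · have h : A ^ 8 = !![-10368,-10368;31104,-10368] := by
        norm_num [A, pow_succ, Matrix.mul_fin_two]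
      have := hd (show (0 : Fin 2) ≠ 1 by decide)
      rw [h] at this
      exact absurd this (by decide)
    · have h : A ^ 9 = !![0,-41472;124416,0] := by norm_num [A, pow_succ, Matrix.mul_fin_two]
      have := hd (show (0 : Fin 2) ≠ 1 by decide)
      rw [h] at this
      exact absurd this (by decide)
    · have h : A ^ 10 = !![124416,-124416;373248,124416] := by
        norm_num [A, pow_succ, Matrix.mul_fin_two]
      have := hd (show (0 : Fin 2) ≠ 1 by decide)
      rw [h] at this
      exact absurd this (by decide)
    · have h : A ^ 11 = !![746496,-248832;746496,746496] := by
        norm_num [A, pow_succ, Matrix.mul_fin_two]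
      have := hd (show (0 : Fin 2) ≠ 1 by decide)
      rw [h] at this
      exact absurd this (by decide)
end

section
/- Let Φ : ℂ² → ℂ² be the polynomial map (x,y) ↦ (x+y, x²+y). Then Φ, viewed as the rational self-map of ℙ² given in homogeneous coordinates by [X:Y:Z] ↦ [XZ+YZ : X²+YZ : Z²], has indeterminacy exactly at the point [0:1:0], while Φ² extends to the everywhere-defined endomorphism [X:Y:Z] ↦ [X²+XZ+2YZ : 2X²+2XY+Y²+YZ : Z²] of ℙ². -/
/-- The homogeneous representative of the rational map
`Φ([X:Y:Z]) = [XZ+YZ : X²+YZ : Z²]` of `ℙ²` (coming from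
`(x,y) ↦ (x+y, x²+y)` on `ℂ²`). -/
noncomputable def phi13 : ℂ × ℂ × ℂ → ℂ × ℂ × ℂ := fun v =>
  (v.1 * v.2.2 + v.2.1 * v.2.2, v.1 ^ 2 + v.2.1 * v.2.2, v.2.2 ^ 2)

/-- The homogeneous representative of
`[X:Y:Z] ↦ [X²+XZ+2YZ : 2X²+2XY+Y²+YZ : Z²]`. -/
noncomputable def phi13sq : ℂ × ℂ × ℂ → ℂ × ℂ × ℂ := fun v =>
  (v.1 ^ 2 + v.1 * v.2.2 + 2 * v.2.1 * v.2.2,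
   2 * v.1 ^ 2 + 2 * v.1 * v.2.1 + v.2.1 ^ 2 + v.2.1 * v.2.2,
   v.2.2 ^ 2)

/-- `Φ : [X:Y:Z] ↦ [XZ+YZ : X²+YZ : Z²]` has indeterminacy exactly at
`[0:1:0]` (i.e. its defining forms vanish simultaneously at a nonzero vector
iff `X = Z = 0`), while `Φ²` is represented, after cancelling the common
factor `Z²`, by the everywhere-defined endomorphism
`[X:Y:Z] ↦ [X²+XZ+2YZ : 2X²+2XY+Y²+YZ : Z²]` of `ℙ²`. -/
theorem stmt_13 :
    (∀ v : ℂ × ℂ × ℂ, v ≠ 0 → (phi13 v = 0 ↔ v.1 = 0 ∧ v.2.2 = 0)) ∧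
    (∀ v : ℂ × ℂ × ℂ, phi13 (phi13 v) = v.2.2 ^ 2 • phi13sq v) ∧
    (∀ v : ℂ × ℂ × ℂ, v ≠ 0 → phi13sq v ≠ 0) := by
  refine ⟨fun v hv => ?_, fun v => ?_, fun v hv h => ?_⟩
  · obtain ⟨x, y, z⟩ := v
    simp only [phi13, Prod.mk_eq_zero]
    constructor
    · rintro ⟨h1, h2, h3⟩
      have hz : z = 0 := by
        have := pow_eq_zero_iff (n := 2) (by norm_num) |>.mp h3
        exact this
      have hx : x = 0 := by
        have : x ^ 2 = 0 := by rw [hz] at h2; linear_combination h2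
        exact pow_eq_zero_iff (n := 2) (by norm_num) |>.mp this
      exact ⟨hx, hz⟩
    · rintro ⟨hx, hz⟩
      subst hx; subst hz; ring_nf; simp
  · obtain ⟨x, y, z⟩ := v
    simp only [phi13, phi13sq, Prod.smul_mk, smul_eq_mul, Prod.ext_iff]
    refine ⟨by ring, by ring, by ring⟩
  · obtain ⟨x, y, z⟩ := v
    simp only [phi13sq, Prod.mk_eq_zero] at h
    obtain ⟨h1, h2, h3⟩ := h
    have hz : z = 0 := pow_eq_zero_iff (n := 2) (by norm_num) |>.mp h3
    subst hz
    have hx : x = 0 := by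
      have : x ^ 2 = 0 := by linear_combination h1
      exact pow_eq_zero_iff (n := 2) (by norm_num) |>.mp this
    subst hx
    have hy : y = 0 := by
      have : y ^ 2 = 0 := by linear_combination h2 - 2*h1
      exact pow_eq_zero_iff (n := 2) (by norm_num) |>.mp this
    exact hv (by simp [hy])
end

section
/- Let Φ be an endomorphism of the torus 𝔾ₘ² given by a translation composed with the group endomorphism associated to a matrix A ∈ M₂(ℤ) with det A ≠ 0. If Φ^k extends to the endomorphism [X^d : Y^d : Z^d] of ℙ² (in the standard toric coordinates with 𝔾ₘ² = ℙ² \ {XYZ = 0}), then A^k = d · Id, and consequently A^i = d' · Id for some d' ≥ 1 and some i ∈ {1,2,3,4,6,8,12}. -/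
/-!
Iterating the monomial map of matrix `A` gives the monomial map of matrix `A ^ k`, and a monomial
map determines its matrix (test it on `(2, 1)` and `(1, 2)`), so `A ^ k = d • 1`.

For the second part, the eigenvalues `α, β` of `A` satisfy `α ^ k = β ^ k = d`, so `ζ = α / β`
is a root of unity with `ζ + ζ⁻¹ = (tr A ^ 2 - 2 det A) / det A` rational. Being an algebraic
integer of absolute value at most `2`, it is an integer `m ∈ [-2, 2]`, i.e.
`tr A ^ 2 = (m + 2) det A`. For `m < 2` the characteristic polynomial divides `X ^ n - c` with
`n = 2, 3, 4, 6`; for `m = 2` it is `(X - a) ^ 2` and `A - a • 1` is a nilpotent whose multiple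
is a scalar, hence `A = a • 1`. Squaring makes the scalar positive.
-/

open Polynomial

section MonomialMap

variable {G : Type*} [CommGroup G]

def monomialMap (μ : G × G) (A : Matrix (Fin 2) (Fin 2) ℤ) (p : G × G) : G × G :=
  (μ.1 * p.1 ^ A 0 0 * p.2 ^ A 0 1, μ.2 * p.1 ^ A 1 0 * p.2 ^ A 1 1)

theorem monomialMap_comp (μ ν : G × G) (A B : Matrix (Fin 2) (Fin 2) ℤ) :
    monomialMap ν B ∘ monomialMap μ A = monomialMap (monomialMap ν B μ) (B * A) := by
  ext p <;>
  simp only [monomialMap, Function.comp_apply, Matrix.mul_apply, Fin.sum_univ_two, mul_zpow,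
    zpow_add, zpow_mul] <;>
  simp only [← zpow_mul, mul_comm (B _ _)] <;>
  simp only [mul_comm, mul_left_comm, mul_assoc]

theorem monomialMap_iterate (μ : G × G) (A : Matrix (Fin 2) (Fin 2) ℤ) (n : ℕ) :
    ∃ ν, (monomialMap μ A)^[n] = monomialMap ν (A ^ n) := by
  induction n with
  | zero => exact ⟨1, by ext p <;> simp [monomialMap]⟩
  | succ n ih =>
    obtain ⟨ν, hν⟩ := ih
    exact ⟨_, by rw [Function.iterate_succ', hν, monomialMap_comp, pow_succ']⟩

theorem eq_of_monomialMap_eq {g : G} (hg : ¬IsOfFinOrder g) {μ ν : G × G}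
    {A B : Matrix (Fin 2) (Fin 2) ℤ} (h : monomialMap μ A = monomialMap ν B) : A = B := by
  have hinj := injective_zpow_iff_not_isOfFinOrder.mpr hg
  have hμν : μ = ν := by simpa [monomialMap] using congrFun h 1
  subst hμν
  have h₁ := congrFun h (g, 1)
  have h₂ := congrFun h (1, g)
  simp only [monomialMap, Prod.mk.injEq, one_zpow, mul_one, mul_right_inj] at h₁ h₂
  ext i j
  fin_cases i <;> fin_cases j
  exacts [hinj h₁.1, hinj h₂.1, hinj h₁.2, hinj h₂.2]

end MonomialMap

theorem Complex.not_isOfFinOrder_mk0_two : ¬IsOfFinOrder (Units.mk0 (2 : ℂ) two_ne_zero) := by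
  rw [isOfFinOrder_iff_pow_eq_one]
  rintro ⟨n, hn, h⟩
  have := Complex.norm_eq_one_of_pow_eq_one (congrArg Units.val h) hn.ne'
  norm_num at this

theorem Complex.exists_int_add_inv_eq_of_pow_eq_one {ζ : ℂ} {k : ℕ} (hk : k ≠ 0)
    (hζ : ζ ^ k = 1) {q : ℚ} (hq : ζ + ζ⁻¹ = q) : ∃ m : ℤ, |m| ≤ 2 ∧ ζ + ζ⁻¹ = m := by
  have hζ' : ζ⁻¹ ^ k = 1 := by rw [inv_pow, hζ, inv_one]
  have hint : IsIntegral ℤ (ζ + ζ⁻¹) :=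
    (IsIntegral.of_pow (Nat.pos_of_ne_zero hk) (hζ ▸ isIntegral_one)).add
      (IsIntegral.of_pow (Nat.pos_of_ne_zero hk) (hζ' ▸ isIntegral_one))
  obtain ⟨m, hm⟩ := hint.exists_int_iff_exists_rat.mp ⟨q, hq⟩
  refine ⟨m, ?_, hm⟩
  have hnorm : ‖ζ‖ = 1 := Complex.norm_eq_one_of_pow_eq_one hζ hk
  have : ‖ζ + ζ⁻¹‖ ≤ 2 := by
    calc ‖ζ + ζ⁻¹‖ ≤ ‖ζ‖ + ‖ζ⁻¹‖ := norm_add_le _ _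
      _ = 2 := by rw [norm_inv, hnorm]; norm_num
  rw [hm, Complex.norm_intCast] at this
  exact_mod_cast this

theorem Int.exists_sq_eq_of_roots_pow_eq {t δ : ℤ} {k : ℕ} {d : ℂ} (hk : k ≠ 0) (hd : d ≠ 0)
    (hroots : ∀ x : ℂ, x ^ 2 - t * x + δ = 0 → x ^ k = d) :
    ∃ m : ℤ, |m| ≤ 2 ∧ t ^ 2 = (m + 2) * δ := by
  obtain ⟨z, hz⟩ := IsAlgClosed.exists_pow_nat_eq ((t : ℂ) ^ 2 - 4 * δ) two_pos
  obtain ⟨α, β, hsum, hprod⟩ : ∃ α β : ℂ, α + β = t ∧ α * β = δ :=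
    ⟨(t + z) / 2, (t - z) / 2, by ring, by linear_combination (-1/4 : ℂ) * hz⟩
  have hαk : α ^ k = d := hroots α (by rw [← hsum, ← hprod]; ring)
  have hβk : β ^ k = d := hroots β (by rw [← hsum, ← hprod]; ring)
  have hα : α ≠ 0 := fun h => hd (by rw [← hαk, h, zero_pow hk])
  have hβ : β ≠ 0 := fun h => hd (by rw [← hβk, h, zero_pow hk])
  have hδ : (δ : ℂ) ≠ 0 := hprod ▸ mul_ne_zero hα hβ
  have hζ : (α / β) ^ k = 1 := by rw [div_pow, hαk, hβk, div_self hd]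
  have hζδ : α / β + (α / β)⁻¹ = ((t : ℂ) ^ 2 - 2 * δ) / δ := by
    rw [inv_div, div_add_div _ _ hβ hα, ← hsum, ← hprod]
    ring
  obtain ⟨m, hm, hζm⟩ := Complex.exists_int_add_inv_eq_of_pow_eq_one hk hζ
    (q := (t ^ 2 - 2 * δ) / δ) (by rw [hζδ]; push_cast; rfl)
  refine ⟨m, hm, ?_⟩
  rw [hζδ, div_eq_iff hδ] at hζm
  exact_mod_cast (by linear_combination hζm : (t : ℂ) ^ 2 = (m + 2) * δ)

theorem Matrix.pow_eq_of_isRoot_charpoly {n R : Type*} [Fintype n] [DecidableEq n] [Nonempty n]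
    [Field R] [IsAlgClosed R] {B : Matrix n n R} {k : ℕ} {c α : R} (hB : B ^ k = c • 1)
    (hα : B.charpoly.IsRoot α) : α ^ k = c := by
  have := spectrum.pow_mem_pow B k (Matrix.mem_spectrum_of_isRoot_charpoly hα)
  rwa [hB, ← Algebra.algebraMap_eq_smul_one, spectrum.scalar_eq, Set.mem_singleton_iff] at this

theorem Matrix.exists_trace_sq_eq_of_pow_eq_smul_one {A : Matrix (Fin 2) (Fin 2) ℤ} {k : ℕ}
    {d : ℤ} (hk : k ≠ 0) (hd : d ≠ 0) (hA : A ^ k = d • 1) :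
    ∃ m : ℤ, |m| ≤ 2 ∧ A.trace ^ 2 = (m + 2) * A.det := by
  have hBk : (Int.castRingHom ℂ).mapMatrix A ^ k = (d : ℂ) • 1 := by
    rw [← map_pow, hA, map_zsmul, map_one, Int.cast_smul_eq_zsmul]
  refine Int.exists_sq_eq_of_roots_pow_eq hk (Int.cast_ne_zero.mpr hd) fun x hx => ?_
  refine Matrix.pow_eq_of_isRoot_charpoly hBk ?_
  simpa [charpoly_fin_two, trace_fin_two, det_fin_two] using hx

theorem Matrix.det_ne_zero_of_pow_eq_smul_one {n R : Type*} [Fintype n] [DecidableEq n]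
    [CommRing R] [IsDomain R] {A : Matrix n n R} {k : ℕ} {d : R} (hk : k ≠ 0) (hd : d ≠ 0)
    (hA : A ^ k = d • 1) : A.det ≠ 0 := by
  intro h
  have := congrArg det hA
  rw [det_pow, h, zero_pow hk, det_smul, det_one, mul_one] at this
  exact pow_ne_zero _ hd this.symm

theorem Matrix.pow_eq_smul_one_of_charpoly_dvd {n R : Type*} [Fintype n] [DecidableEq n]
    [CommRing R] {A : Matrix n n R} {k : ℕ} {c : R} (h : A.charpoly ∣ X ^ k - C c) :
    A ^ k = c • 1 := by
  have := aeval_eq_zero_of_dvd_aeval_eq_zero h A.aeval_self_charpoly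
  rwa [map_sub, aeval_X_pow, aeval_C, Algebra.algebraMap_eq_smul_one, sub_eq_zero] at this

theorem Matrix.exists_pow_eq_smul_one_of_trace_sq_eq {A : Matrix (Fin 2) (Fin 2) ℤ} {m : ℤ}
    (hm : -2 ≤ m ∧ m ≤ 1) (hδ : A.det ≠ 0) (h : A.trace ^ 2 = (m + 2) * A.det) :
    ∃ n ∈ ({2, 3, 4, 6} : Finset ℕ), ∃ c : ℤ, c ≠ 0 ∧ A ^ n = c • 1 := by
  obtain ⟨hm₁, hm₂⟩ := hm
  set t := A.trace
  set δ := A.det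
  have hchar : A.charpoly = X ^ 2 - C t * X + C δ := charpoly_fin_two A
  interval_cases m
  · have ht : C t = 0 := by simpa [t] using h
    refine ⟨2, by decide, -δ, neg_ne_zero.mpr hδ, pow_eq_smul_one_of_charpoly_dvd ⟨1, ?_⟩⟩
    rw [hchar, ht, map_neg]
    ring
  · have ht : C t ^ 2 = C δ := by rw [← map_pow, h]; norm_num
    have htne : t ≠ 0 := fun h0 => hδ (by linear_combination -h + t * h0)
    refine ⟨3, by decide, -t ^ 3, by simpa using htne, pow_eq_smul_one_of_charpoly_dvd
      ⟨X + C t, ?_⟩⟩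
    rw [hchar, map_neg, map_pow]
    linear_combination (X + C t) * ht
  · have ht : C t ^ 2 = 2 * C δ := by rw [← map_pow, h]; simp
    refine ⟨4, by decide, -δ ^ 2, by simpa using hδ, pow_eq_smul_one_of_charpoly_dvd
      ⟨X ^ 2 + C t * X + C δ, ?_⟩⟩
    rw [hchar, map_neg, map_pow]
    linear_combination X ^ 2 * ht
  · have ht : C t ^ 2 = 3 * C δ := by rw [← map_pow, h]; simp
    refine ⟨6, by decide, -δ ^ 3, by simpa using hδ, pow_eq_smul_one_of_charpoly_dvd
      ⟨(X ^ 2 + C t * X + C δ) * (X ^ 2 + C δ), ?_⟩⟩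
    rw [hchar, map_neg, map_pow]
    linear_combination (X ^ 4 + C δ * X ^ 2) * ht

theorem smul_one_add_pow_of_mul_self_eq_zero {R : Type*} [Ring R] {N : R} (hN : N * N = 0)
    (a : ℤ) (k : ℕ) : (a • 1 + N) ^ (k + 1) = a ^ (k + 1) • 1 + ((k + 1) * a ^ k) • N := by
  induction k with
  | zero => simp
  | succ k ih =>
    rw [pow_succ, ih]
    simp only [add_mul, mul_add, smul_mul_assoc, mul_smul_comm, mul_one, one_mul, hN,
      smul_zero]
    push_cast
    module

theorem Matrix.exists_eq_smul_one_of_trace_sq_eq {A : Matrix (Fin 2) (Fin 2) ℤ} {k : ℕ}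
    {d : ℤ} (hk : k ≠ 0) (hA : A ^ k = d • 1) (hδ : A.det ≠ 0)
    (h : A.trace ^ 2 = 4 * A.det) : ∃ a : ℤ, a ≠ 0 ∧ A = a • 1 := by
  obtain ⟨a, ha⟩ : 2 ∣ A.trace :=
    Int.prime_two.dvd_of_dvd_pow (n := 2) ⟨2 * A.det, by rw [h]; ring⟩
  have hδa : A.det = a ^ 2 := by linarith [ha ▸ h]
  have ha0 : a ≠ 0 := by rintro rfl; exact hδ (by simpa using hδa)
  set N := A - a • 1 with hN
  have hNN : N * N = 0 := by
    have hCH := A.aeval_self_charpoly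
    have hsq : X ^ 2 - C (2 * a) * X + C (a ^ 2) = (X - C a) ^ 2 := by
      simp only [map_mul, map_pow, map_ofNat]
      ring
    rw [charpoly_fin_two, ha, hδa, hsq, map_pow, map_sub, aeval_X, aeval_C,
      Algebra.algebraMap_eq_smul_one, sq] at hCH
    exact hCH
  obtain ⟨j, rfl⟩ := Nat.exists_eq_succ_of_ne_zero hk
  have hs : ((j + 1) * a ^ j) • N = (d - a ^ (j + 1)) • 1 := by
    have hbin := smul_one_add_pow_of_mul_self_eq_zero hNN a j
    rw [hN, add_sub_cancel, hA] at hbin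
    rw [sub_smul, hbin, hN]
    abel
  -- squaring kills the left side, since `N * N = 0`
  have hs0 : d - a ^ (j + 1) = 0 := by
    have := congrArg (fun M => M * M) hs
    simp only [smul_mul_smul, hNN, smul_zero, mul_one] at this
    exact mul_self_eq_zero.mp ((smul_eq_zero.mp this.symm).resolve_right one_ne_zero)
  rw [hs0, zero_smul, smul_eq_zero] at hs
  exact ⟨a, ha0, sub_eq_zero.mp (hs.resolve_left (by positivity))⟩

theorem exists_pow_eq_pos_smul_one_of_ne_zero {R : Type*} [Ring R] {a : R} {n : ℕ}
    {c : ℤ} (hc : c ≠ 0) (h : a ^ n = c • 1) :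
    ∃ i ∈ ({n, 2 * n} : Finset ℕ), ∃ d : ℤ, 1 ≤ d ∧ a ^ i = d • 1 := by
  rcases le_or_gt 1 c with hc₁ | hc₁
  · exact ⟨n, by simp, c, hc₁, h⟩
  · refine ⟨2 * n, by simp, c ^ 2, by nlinarith [sq_pos_of_ne_zero hc], ?_⟩
    rw [mul_comm, pow_mul, h, _root_.smul_pow, one_pow]

theorem Matrix.exists_pow_eq_pos_smul_one_of_pow_eq_smul_one {A : Matrix (Fin 2) (Fin 2) ℤ}
    {k : ℕ} {d : ℤ} (hk : k ≠ 0) (hd : d ≠ 0) (hA : A ^ k = d • 1) :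
    ∃ i ∈ ({1, 2, 3, 4, 6, 8, 12} : Finset ℕ), ∃ d' : ℤ, 1 ≤ d' ∧ A ^ i = d' • 1 := by
  have hδ := det_ne_zero_of_pow_eq_smul_one hk hd hA
  obtain ⟨n, hn, c, hc, hAn⟩ :
      ∃ n ∈ ({1, 2, 3, 4, 6} : Finset ℕ), ∃ c : ℤ, c ≠ 0 ∧ A ^ n = c • 1 := by
    obtain ⟨m, hm, htr⟩ := exists_trace_sq_eq_of_pow_eq_smul_one hk hd hA
    obtain ⟨hm₁, hm₂⟩ := abs_le.mp hm
    rcases hm₂.lt_or_eq with hm₂ | rfl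
    · obtain ⟨n, hn, hAn⟩ := exists_pow_eq_smul_one_of_trace_sq_eq ⟨hm₁, by omega⟩ hδ htr
      exact ⟨n, by fin_cases hn <;> decide, hAn⟩
    · obtain ⟨a, ha, rfl⟩ := exists_eq_smul_one_of_trace_sq_eq hk hA hδ (by linarith)
      exact ⟨1, by decide, a, ha, pow_one _⟩
  obtain ⟨i, hi, hAi⟩ := exists_pow_eq_pos_smul_one_of_ne_zero hc hAn
  exact ⟨i, by fin_cases hn <;> simp at hi <;> rcases hi with rfl | rfl <;> decide, hAi⟩

theorem stmt_17_general (A : Matrix (Fin 2) (Fin 2) ℤ)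
    (lam₁ lam₂ : ℂˣ) (Φ : ℂˣ × ℂˣ → ℂˣ × ℂˣ)
    (hΦ : ∀ p : ℂˣ × ℂˣ,
      Φ p = (lam₁ * p.1 ^ A 0 0 * p.2 ^ A 0 1,
             lam₂ * p.1 ^ A 1 0 * p.2 ^ A 1 1))
    (d k : ℕ) (hd : 1 ≤ d) (hk : 1 ≤ k)
    (hext : Φ^[k] = fun p : ℂˣ × ℂˣ => (p.1 ^ d, p.2 ^ d)) :
    A ^ k = (d : ℤ) • (1 : Matrix (Fin 2) (Fin 2) ℤ) ∧
      ∃ i ∈ ({1, 2, 3, 4, 6, 8, 12} : Finset ℕ), ∃ d' : ℤ, 1 ≤ d' ∧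
        A ^ i = d' • (1 : Matrix (Fin 2) (Fin 2) ℤ) := by
  have hΦ' : Φ = monomialMap (lam₁, lam₂) A := funext hΦ
  have hpow : (fun p : ℂˣ × ℂˣ => (p.1 ^ d, p.2 ^ d)) = monomialMap 1 ((d : ℤ) • 1) := by
    ext p <;> simp [monomialMap]
  obtain ⟨μ, hμ⟩ := monomialMap_iterate (lam₁, lam₂) A k
  have hAk : A ^ k = (d : ℤ) • 1 :=
    eq_of_monomialMap_eq Complex.not_isOfFinOrder_mk0_two (by rw [← hμ, ← hΦ', hext, hpow])
  exact ⟨hAk, Matrix.exists_pow_eq_pos_smul_one_of_pow_eq_smul_one (by omega) (by omega) hAk⟩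

/-- Let `Φ` be an endomorphism of the torus `𝔾ₘ²`, a translation by
`(λ₁, λ₂)` composed with the monomial (group) endomorphism of matrix
`A ∈ M₂(ℤ)`, `det A ≠ 0`.  If `Φ^k` restricted to the torus is the power map
`(x,y) ↦ (x^d, y^d)` (the restriction of `[X^d:Y^d:Z^d]` on `ℙ²`), then
`A^k = d·Id`, and consequently `A^i = d'·Id` for some `d' ≥ 1` and some
`i ∈ {1,2,3,4,6,8,12}`. -/
theorem stmt_17 (A : Matrix (Fin 2) (Fin 2) ℤ) (hdet : A.det ≠ 0)
    (lam₁ lam₂ : ℂˣ) (Φ : ℂˣ × ℂˣ → ℂˣ × ℂˣ)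
    (hΦ : ∀ p : ℂˣ × ℂˣ,
      Φ p = (lam₁ * p.1 ^ A 0 0 * p.2 ^ A 0 1,
             lam₂ * p.1 ^ A 1 0 * p.2 ^ A 1 1))
    (d k : ℕ) (hd : 1 ≤ d) (hk : 1 ≤ k)
    (hext : Φ^[k] = fun p : ℂˣ × ℂˣ => (p.1 ^ d, p.2 ^ d)) :
    A ^ k = (d : ℤ) • (1 : Matrix (Fin 2) (Fin 2) ℤ) ∧
      ∃ i ∈ ({1, 2, 3, 4, 6, 8, 12} : Finset ℕ), ∃ d' : ℤ, 1 ≤ d' ∧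
        A ^ i = d' • (1 : Matrix (Fin 2) (Fin 2) ℤ) :=
  stmt_17_general A lam₁ lam₂ Φ hΦ d k hd hk hext
end
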